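/- arXiv:1310.5192 — 8 statements merged into one kernel-verified Lean document; each statement's English description precedes it below -/
import Mathlib

section
/- Suppose a₁ > 0 and a₂ < 0. Then every solution u of the mean-field best-response ODE with u(t) ∈ [0,1] for all t ≥ 0 satisfies u(t) → 1 as t → ∞. -/
/-!
With `a₁ > 0 > a₂`, strategy 1 strictly wins at every state `u ∈ [0, 1]`, so the dynamics
reduce to `u' = 1 - u`, whose solutions `1 + (u 0 - 1) e^{-t}` tend to `1`.
-/

open Filter Real Set Topology

lemma mul_lt_mul_one_sub_of_pos_of_neg {a₁ a₂ x : ℝ} (ha₁ : 0 < a₁) (ha₂ : a₂ < 0)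
    (hx : x ∈ Icc (0 : ℝ) 1) : a₂ * (1 - x) < a₁ * x := by
  obtain ⟨hx₀, hx₁⟩ := hx
  rcases hx₀.lt_or_eq with hpos | rfl
  · nlinarith
  · simpa using ha₂

lemma eq_of_forall_hasDerivAt_const_sub {u : ℝ → ℝ} {c : ℝ}
    (hu : ∀ t, 0 ≤ t → HasDerivAt u (c - u t) t) {t : ℝ} (ht : 0 ≤ t) :
    u t = c + (u 0 - c) * exp (-t) := by
  have hderiv : ∀ s, 0 ≤ s → HasDerivAt (fun s => (u s - c) * exp s) 0 s := fun s hs => by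
    have h := ((hu s hs).sub_const c).mul (hasDerivAt_exp s)
    rwa [show (c - u s) * exp s + (u s - c) * exp s = 0 by ring] at h
  have hconst : (u t - c) * exp t = (u 0 - c) * exp 0 :=
    constant_of_has_deriv_right_zero
      (fun s hs => (hderiv s hs.1).continuousAt.continuousWithinAt)
      (fun s hs => (hderiv s hs.1).hasDerivWithinAt) t ⟨ht, le_rfl⟩
  rw [exp_zero, mul_one] at hconst
  rw [← hconst, mul_assoc, ← exp_add, add_neg_cancel, exp_zero]
  ring

lemma tendsto_of_forall_hasDerivAt_const_sub {u : ℝ → ℝ} {c : ℝ}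
    (hu : ∀ t, 0 ≤ t → HasDerivAt u (c - u t) t) : Tendsto u atTop (𝓝 c) := by
  have hexp : Tendsto (fun t => c + (u 0 - c) * exp (-t)) atTop (𝓝 c) := by
    simpa using ((tendsto_exp_atBot.comp tendsto_neg_atTop_atBot).const_mul (u 0 - c)).const_add c
  refine hexp.congr' ?_
  filter_upwards [eventually_ge_atTop 0] with t ht
  exact (eq_of_forall_hasDerivAt_const_sub hu ht).symm

/-- Mean-field best-response ODE: if strategy 1 is selfish (`a₁ > 0`) and strategy 2 is
altruistic (`a₂ < 0`), then every solution taking values in `[0,1]` converges to `1`. -/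
theorem meanfield_selfish_altruistic_wins (a₁ a₂ : ℝ) (ha₁ : 0 < a₁) (ha₂ : a₂ < 0)
    (u : ℝ → ℝ)
    (hrange : ∀ t : ℝ, 0 ≤ t → u t ∈ Set.Icc (0 : ℝ) 1)
    (hode : ∀ t : ℝ, 0 ≤ t →
      HasDerivAt u
        ((1 - u t) * (if a₁ * u t > a₂ * (1 - u t) then (1 : ℝ) else 0)
          - u t * (if a₁ * u t < a₂ * (1 - u t) then (1 : ℝ) else 0)) t) :
    Filter.Tendsto u Filter.atTop (nhds 1) := by
  refine tendsto_of_forall_hasDerivAt_const_sub fun t ht => ?_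
  have hwins := mul_lt_mul_one_sub_of_pos_of_neg ha₁ ha₂ (hrange t ht)
  simpa [hwins, hwins.not_gt] using hode t ht
end

section
/- Suppose a₁ < 0 and a₂ > 0. Then every solution u of the mean-field best-response ODE with u(t) ∈ [0,1] for all t ≥ 0 satisfies u(t) → 0 as t → ∞. -/
/-!
Since `a₁ < 0 < a₂`, the payoff `a₂ (1 - u)` of strategy 2 strictly exceeds the payoff `a₁ u` of
strategy 1 at every state `u ∈ [0, 1]`, so along the solution the ODE is just `u' = -u` and
`u t = u 0 * exp (-t)`.
-/

open Filter Real Topology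

lemma mul_lt_mul_one_sub_of_neg_of_pos {a₁ a₂ x : ℝ} (ha₁ : a₁ < 0) (ha₂ : 0 < a₂)
    (hx : x ∈ Set.Icc (0 : ℝ) 1) : a₁ * x < a₂ * (1 - x) := by
  obtain ⟨hx₀, hx₁⟩ := hx
  rcases hx₁.lt_or_eq with hx₁ | rfl
  · nlinarith
  · simpa using ha₁

lemma eq_mul_exp_of_hasDerivAt_const_mul {u : ℝ → ℝ} {c : ℝ}
    (hu : ∀ t, 0 ≤ t → HasDerivAt u (c * u t) t) {t : ℝ} (ht : 0 ≤ t) :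
    u t = u 0 * exp (c * t) := by
  set g : ℝ → ℝ := fun s => u s * exp (-(c * s))
  have hg : ∀ s, 0 ≤ s → HasDerivAt g 0 s := by
    intro s hs
    have he : HasDerivAt (fun s => exp (-(c * s))) (exp (-(c * s)) * -c) s := by
      simpa using ((hasDerivAt_id s).const_mul c).neg.exp
    exact ((hu s hs).mul he).congr_deriv (by ring)
  have hconst : g t = g 0 :=
    constant_of_has_deriv_right_zero (fun s hs => (hg s hs.1).continuousAt.continuousWithinAt)
      (fun s hs => (hg s hs.1).hasDerivWithinAt) t ⟨ht, le_rfl⟩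
  simpa only [g, mul_zero, neg_zero, exp_zero, mul_one, mul_assoc, ← exp_add, neg_add_cancel]
    using congrArg (· * exp (c * t)) hconst

lemma tendsto_zero_of_hasDerivAt_neg_self {u : ℝ → ℝ}
    (hu : ∀ t, 0 ≤ t → HasDerivAt u (-u t) t) : Tendsto u atTop (𝓝 0) := by
  have hexp : ∀ t, 0 ≤ t → u t = u 0 * exp (-1 * t) :=
    fun t ht => eq_mul_exp_of_hasDerivAt_const_mul (fun s hs => by simpa using hu s hs) ht
  have hlim : Tendsto (fun t => u 0 * exp (-1 * t)) atTop (𝓝 0) := by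
    simpa using tendsto_exp_neg_atTop_nhds_zero.const_mul (u 0)
  refine hlim.congr' ?_
  filter_upwards [eventually_ge_atTop 0] with t ht
  exact (hexp t ht).symm

/-- Mean-field best-response ODE: if strategy 1 is altruistic (`a₁ < 0`) and strategy 2 is
selfish (`a₂ > 0`), then every solution taking values in `[0,1]` converges to `0`. -/
theorem meanfield_altruistic_selfish_loses (a₁ a₂ : ℝ) (ha₁ : a₁ < 0) (ha₂ : 0 < a₂)
    (u : ℝ → ℝ)
    (hrange : ∀ t : ℝ, 0 ≤ t → u t ∈ Set.Icc (0 : ℝ) 1)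
    (hode : ∀ t : ℝ, 0 ≤ t →
      HasDerivAt u
        ((1 - u t) * (if a₁ * u t > a₂ * (1 - u t) then (1 : ℝ) else 0)
          - u t * (if a₁ * u t < a₂ * (1 - u t) then (1 : ℝ) else 0)) t) :
    Filter.Tendsto u Filter.atTop (nhds 0) := by
  refine tendsto_zero_of_hasDerivAt_neg_self fun t ht => ?_
  have hlt := mul_lt_mul_one_sub_of_neg_of_pos ha₁ ha₂ (hrange t ht)
  simpa [hlt, hlt.not_gt] using hode t ht
end

section
/- Suppose a₁ < 0 and a₂ < 0, and set u* := a₂/(a₁ + a₂). Then u* ∈ (0,1), and every solution u of the mean-field best-response ODE with u(t) ∈ [0,1] for all t ≥ 0 satisfies u(t) → u* as t → ∞ (coexistence of the two altruistic strategies in the mean-field model). -/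
/-!
For `a₁, a₂ < 0` the switching threshold `s = a₂ / (a₁ + a₂)` lies in `(0, 1)`, and the
best-response field pushes every state towards it with speed at least `c = min s (1 - s)`:
below `s` the velocity is `1 - x > 1 - s`, above it the velocity is `-x < -s`. Hence the energy
`(u - s)²` decreases at rate at least `2c|u - s|`, so it falls below any `ε²` in time at most
`(u 0 - s)² / (2cε)` and stays there.
-/

open Filter Set Topology

noncomputable def bestResponseField (a₁ a₂ x : ℝ) : ℝ :=
  (1 - x) * (if a₁ * x > a₂ * (1 - x) then (1 : ℝ) else 0)
    - x * (if a₁ * x < a₂ * (1 - x) then (1 : ℝ) else 0)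

lemma antitoneOn_Ici_of_hasDerivAt_nonpos {f f' : ℝ → ℝ} {a : ℝ}
    (hf : ∀ t, a ≤ t → HasDerivAt f (f' t) t) (hf' : ∀ t, a ≤ t → f' t ≤ 0) :
    AntitoneOn f (Ici a) := by
  refine antitoneOn_of_hasDerivWithinAt_nonpos (f' := f') (convex_Ici a)
    (fun t ht => (hf t ht).continuousAt.continuousWithinAt) (fun t ht => ?_) fun t ht => ?_
  all_goals rw [interior_Ici] at ht
  exacts [(hf t ht.le).hasDerivWithinAt, hf' t ht.le]

lemma tendsto_zero_of_hasDerivAt_le_neg {φ φ' : ℝ → ℝ}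
    (hφ : ∀ t, 0 ≤ t → HasDerivAt φ (φ' t) t) (h_nonneg : ∀ t, 0 ≤ t → 0 ≤ φ t)
    (h_nonpos : ∀ t, 0 ≤ t → φ' t ≤ 0)
    (h_neg : ∀ ε > 0, ∃ δ > 0, ∀ t, 0 ≤ t → ε ≤ φ t → φ' t ≤ -δ) :
    Tendsto φ atTop (𝓝 0) := by
  have h_anti := antitoneOn_Ici_of_hasDerivAt_nonpos hφ h_nonpos
  rw [Metric.tendsto_atTop]
  intro ε hε
  suffices ∃ T, 0 ≤ T ∧ φ T < ε by
    obtain ⟨T, hT, hφT⟩ := this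
    refine ⟨T, fun t ht => ?_⟩
    have hφt := h_anti (mem_Ici.2 hT) (mem_Ici.2 (hT.trans ht)) ht
    rw [Real.dist_0_eq_abs, abs_of_nonneg (h_nonneg t (hT.trans ht))]
    exact hφt.trans_lt hφT
  by_contra! h_large
  obtain ⟨δ, hδ, hφ'δ⟩ := h_neg ε hε
  have h_drop : AntitoneOn (fun t => φ t + δ * t) (Ici 0) :=
    antitoneOn_Ici_of_hasDerivAt_nonpos (fun t ht => (hφ t ht).add ((hasDerivAt_id t).const_mul δ))
      fun t ht => by linarith [hφ'δ t ht (h_large t ht)]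
  set T := (φ 0 + 1) / δ
  have hT : 0 ≤ T := div_nonneg (by linarith [h_nonneg 0 le_rfl]) hδ.le
  have h_le : φ T + δ * T ≤ φ 0 + δ * 0 := h_drop self_mem_Ici (mem_Ici.2 hT) hT
  have hδT : δ * T = φ 0 + 1 := mul_div_cancel₀ _ hδ.ne'
  linarith [h_nonneg T hT]

lemma tendsto_of_sub_mul_hasDerivAt_le {u u' : ℝ → ℝ} {s c : ℝ} (hc : 0 < c)
    (hu : ∀ t, 0 ≤ t → HasDerivAt u (u' t) t)
    (h_drift : ∀ t, 0 ≤ t → (u t - s) * u' t ≤ -c * |u t - s|) :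
    Tendsto u atTop (𝓝 s) := by
  have h_energy : ∀ t, 0 ≤ t →
      HasDerivAt (fun τ => (u τ - s) ^ 2) (2 * ((u t - s) * u' t)) t := fun t ht => by
    refine (((hu t ht).sub_const s).fun_pow 2).congr_deriv ?_
    push_cast
    ring
  have h_sq : Tendsto (fun t => (u t - s) ^ 2) atTop (𝓝 0) := by
    refine tendsto_zero_of_hasDerivAt_le_neg h_energy (fun t _ => sq_nonneg _)
      (fun t ht => by nlinarith [h_drift t ht, abs_nonneg (u t - s)]) fun ε hε => ?_
    refine ⟨2 * c * √ε, by positivity, fun t ht hεt => ?_⟩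
    have h_dist : √ε ≤ |u t - s| := by
      simpa [Real.sqrt_sq_eq_abs] using Real.sqrt_le_sqrt hεt
    nlinarith [h_drift t ht]
  rw [tendsto_iff_norm_sub_tendsto_zero]
  simpa [Real.sqrt_sq_eq_abs] using h_sq.sqrt

lemma div_add_mem_Ioo_of_neg {a₁ a₂ : ℝ} (ha₁ : a₁ < 0) (ha₂ : a₂ < 0) :
    a₂ / (a₁ + a₂) ∈ Ioo (0 : ℝ) 1 := by
  have hsum : a₁ + a₂ < 0 := by linarith
  exact ⟨div_pos_of_neg_of_neg ha₂ hsum, (div_lt_one_of_neg hsum).2 (by linarith)⟩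

lemma sub_mul_bestResponseField_le {a₁ a₂ : ℝ} (hsum : a₁ + a₂ < 0) (x : ℝ) :
    (x - a₂ / (a₁ + a₂)) * bestResponseField a₁ a₂ x ≤
      -min (a₂ / (a₁ + a₂)) (1 - a₂ / (a₁ + a₂)) * |x - a₂ / (a₁ + a₂)| := by
  set s := a₂ / (a₁ + a₂)
  have h_gt : a₁ * x > a₂ * (1 - x) ↔ x < s := by
    rw [lt_div_iff_of_neg hsum]; constructor <;> intro h <;> linarith
  have h_lt : a₁ * x < a₂ * (1 - x) ↔ s < x := by
    rw [div_lt_iff_of_neg hsum]; constructor <;> intro h <;> linarith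
  have hc₀ := min_le_left s (1 - s)
  have hc₁ := min_le_right s (1 - s)
  unfold bestResponseField
  rcases lt_trichotomy x s with hx | rfl | hx
  · rw [if_pos (h_gt.2 hx), if_neg (by rw [h_lt]; exact not_lt.2 hx.le),
      abs_of_neg (sub_neg.2 hx)]
    nlinarith
  · simp
  · rw [if_neg (by rw [h_gt]; exact not_lt.2 hx.le), if_pos (h_lt.2 hx),
      abs_of_pos (sub_pos.2 hx)]
    nlinarith

/-- Mean-field best-response ODE: if both strategies are altruistic (`a₁ < 0` and `a₂ < 0`),
then `u* := a₂ / (a₁ + a₂)` lies in `(0,1)` and every solution taking values in `[0,1]`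
converges to `u*` (coexistence). -/
theorem meanfield_altruistic_altruistic_coexistence (a₁ a₂ : ℝ) (ha₁ : a₁ < 0) (ha₂ : a₂ < 0) :
    a₂ / (a₁ + a₂) ∈ Set.Ioo (0 : ℝ) 1 ∧
    ∀ u : ℝ → ℝ,
      (∀ t : ℝ, 0 ≤ t → u t ∈ Set.Icc (0 : ℝ) 1) →
      (∀ t : ℝ, 0 ≤ t →
        HasDerivAt u
          ((1 - u t) * (if a₁ * u t > a₂ * (1 - u t) then (1 : ℝ) else 0)
            - u t * (if a₁ * u t < a₂ * (1 - u t) then (1 : ℝ) else 0)) t) →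
      Filter.Tendsto u Filter.atTop (nhds (a₂ / (a₁ + a₂))) := by
  have hs := div_add_mem_Ioo_of_neg ha₁ ha₂
  refine ⟨hs, fun u _ hu => ?_⟩
  exact tendsto_of_sub_mul_hasDerivAt_le (u' := fun t => bestResponseField a₁ a₂ (u t))
    (lt_min hs.1 (sub_pos.2 hs.2)) hu
    fun t _ => sub_mul_bestResponseField_le (by linarith) (u t)
end

section
/- Suppose a₁ > 0 and a₂ > 0, and set u* := a₂/(a₁ + a₂). Then every solution u of the mean-field best-response ODE with u(t) ∈ [0,1] for all t ≥ 0 and initial condition u(0) > u* satisfies u(t) → 1 as t → ∞ (one half of the bistability of the mean-field model with two selfish strategies). -/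
/-!
Above the threshold `u* = a₂ / (a₁ + a₂)` the equation reads `u' = 1 - u`, so `(1 - u t) * exp t`
is constant there and `u t = 1 - (1 - u 0) * exp (-t)`. Since `u* < 1`, this explicit curve never
comes back down to `u*`; a first-exit argument therefore shows that `u` stays above `u*` forever,
hence equals the explicit curve, which tends to `1`.
-/

open Set Filter Topology Real

lemma ContinuousOn.exists_first_le {α β : Type*} [ConditionallyCompleteLinearOrder α]
    [TopologicalSpace α] [OrderTopology α] [LinearOrder β] [TopologicalSpace β]
    [OrderClosedTopology β] {f : α → β} {a b : α} {c : β} (hf : ContinuousOn f (Icc a b))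
    (hab : a ≤ b) (hb : f b ≤ c) : ∃ s ∈ Icc a b, f s ≤ c ∧ ∀ t ∈ Ico a s, c < f t := by
  set S := Icc a b ∩ f ⁻¹' Iic c
  have hS : IsCompact S :=
    isCompact_Icc.of_isClosed_subset (hf.preimage_isClosed_of_isClosed isClosed_Icc isClosed_Iic)
      inter_subset_left
  obtain ⟨hs, hfs⟩ : sInf S ∈ S := hS.sInf_mem ⟨b, ⟨hab, le_rfl⟩, hb⟩
  refine ⟨sInf S, hs, hfs, fun t ht => not_le.1 fun hft => ?_⟩
  exact (csInf_le hS.bddBelow ⟨⟨ht.1, ht.2.le.trans hs.2⟩, hft⟩).not_gt ht.2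

lemma one_sub_mul_exp_eq_of_hasDerivAt {f : ℝ → ℝ} {s : ℝ} (hcont : ContinuousOn f (Icc 0 s))
    (hf : ∀ t ∈ Ico 0 s, HasDerivAt f (1 - f t) t) :
    ∀ x ∈ Icc 0 s, (1 - f x) * exp x = 1 - f 0 := by
  have hconst := constant_of_has_deriv_right_zero
    ((continuousOn_const.sub hcont).mul continuous_exp.continuousOn) fun t ht => by
      have := ((hf t ht).const_sub 1).mul (hasDerivAt_exp t)
      exact (this.congr_deriv (by ring)).hasDerivWithinAt
  simpa using hconst

section OneSubRate

variable {f : ℝ → ℝ} {c : ℝ}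

lemma lt_apply_of_hasDerivAt_one_sub (hc : c < 1) (hcont : ContinuousOn f (Ici 0))
    (hf : ∀ t, 0 ≤ t → c < f t → HasDerivAt f (1 - f t) t) (h0 : c < f 0) :
    ∀ t, 0 ≤ t → c < f t := by
  intro T hT
  by_contra! hfT
  obtain ⟨s, hs, hfs, hlt⟩ := (hcont.mono Icc_subset_Ici_self).exists_first_le hT hfT
  have hexp := one_sub_mul_exp_eq_of_hasDerivAt (hcont.mono Icc_subset_Ici_self)
    (fun t ht => hf t ht.1 (hlt t ht)) s ⟨hs.1, le_rfl⟩
  -- `0 < 1 - c ≤ 1 - f s` and `1 ≤ exp s` contradict `(1 - f s) * exp s = 1 - f 0 < 1 - c`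
  nlinarith [one_le_exp hs.1]

lemma eq_one_sub_mul_exp_neg_of_hasDerivAt (hc : c < 1) (hcont : ContinuousOn f (Ici 0))
    (hf : ∀ t, 0 ≤ t → c < f t → HasDerivAt f (1 - f t) t) (h0 : c < f 0) :
    ∀ t, 0 ≤ t → f t = 1 - (1 - f 0) * exp (-t) := by
  intro t ht
  have hgt := lt_apply_of_hasDerivAt_one_sub hc hcont hf h0
  have := one_sub_mul_exp_eq_of_hasDerivAt (hcont.mono Icc_subset_Ici_self)
    (fun x hx => hf x hx.1 (hgt x hx.1)) t ⟨ht, le_rfl⟩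
  rw [← this, mul_assoc, ← exp_add, add_neg_cancel, exp_zero]
  ring

lemma tendsto_one_of_hasDerivAt_one_sub (hc : c < 1) (hcont : ContinuousOn f (Ici 0))
    (hf : ∀ t, 0 ≤ t → c < f t → HasDerivAt f (1 - f t) t) (h0 : c < f 0) :
    Tendsto f atTop (𝓝 1) := by
  have hlim : Tendsto (fun t => 1 - (1 - f 0) * exp (-t)) atTop (𝓝 1) := by
    simpa using tendsto_const_nhds.sub (tendsto_exp_neg_atTop_nhds_zero.const_mul (1 - f 0))
  refine hlim.congr' ?_
  filter_upwards [eventually_ge_atTop 0] with t ht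
  exact (eq_one_sub_mul_exp_neg_of_hasDerivAt hc hcont hf h0 t ht).symm

end OneSubRate

lemma bestResponse_rate_of_gt {a₁ a₂ x : ℝ} (hsum : 0 < a₁ + a₂) (hx : a₂ / (a₁ + a₂) < x) :
    (1 - x) * (if a₁ * x > a₂ * (1 - x) then (1 : ℝ) else 0)
      - x * (if a₁ * x < a₂ * (1 - x) then (1 : ℝ) else 0) = 1 - x := by
  have hprefer : a₂ * (1 - x) < a₁ * x := by
    rw [div_lt_iff₀ hsum] at hx
    linarith
  rw [if_pos hprefer, if_neg hprefer.not_gt]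
  ring

theorem meanfield_selfish_selfish_bistable_up_general (a₁ a₂ : ℝ) (ha₁ : 0 < a₁) (ha₂ : 0 < a₂)
    (u : ℝ → ℝ)
    (hode : ∀ t : ℝ, 0 ≤ t →
      HasDerivAt u
        ((1 - u t) * (if a₁ * u t > a₂ * (1 - u t) then (1 : ℝ) else 0)
          - u t * (if a₁ * u t < a₂ * (1 - u t) then (1 : ℝ) else 0)) t)
    (h0 : u 0 > a₂ / (a₁ + a₂)) :
    Filter.Tendsto u Filter.atTop (nhds 1) := by
  have hsum : 0 < a₁ + a₂ := add_pos ha₁ ha₂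
  have hc : a₂ / (a₁ + a₂) < 1 := (div_lt_one hsum).2 (by linarith)
  refine tendsto_one_of_hasDerivAt_one_sub hc
    (fun t ht => (hode t ht).continuousAt.continuousWithinAt) (fun t ht hgt => ?_) h0
  simpa only [bestResponse_rate_of_gt hsum hgt] using hode t ht

/-- Mean-field best-response ODE: if both strategies are selfish (`a₁ > 0` and `a₂ > 0`),
then every solution taking values in `[0,1]` with initial condition above
`u* := a₂ / (a₁ + a₂)` converges to `1` (one half of bistability). -/
theorem meanfield_selfish_selfish_bistable_up (a₁ a₂ : ℝ) (ha₁ : 0 < a₁) (ha₂ : 0 < a₂)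
    (u : ℝ → ℝ)
    (hrange : ∀ t : ℝ, 0 ≤ t → u t ∈ Set.Icc (0 : ℝ) 1)
    (hode : ∀ t : ℝ, 0 ≤ t →
      HasDerivAt u
        ((1 - u t) * (if a₁ * u t > a₂ * (1 - u t) then (1 : ℝ) else 0)
          - u t * (if a₁ * u t < a₂ * (1 - u t) then (1 : ℝ) else 0)) t)
    (h0 : u 0 > a₂ / (a₁ + a₂)) :
    Filter.Tendsto u Filter.atTop (nhds 1) :=
  meanfield_selfish_selfish_bistable_up_general a₁ a₂ ha₁ ha₂ u hode h0
end

section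
/- Suppose a₁ > 0 and a₂ > 0, and set u* := a₂/(a₁ + a₂). Then every solution u of the mean-field best-response ODE with u(t) ∈ [0,1] for all t ≥ 0 and initial condition u(0) < u* satisfies u(t) → 0 as t → ∞ (the other half of the bistability of the mean-field model with two selfish strategies). -/
/-!
Below the interior rest point `u* = a₂ / (a₁ + a₂)` the best response is the second strategy, so
the dynamics reduce to `u' = -u`. A solution starting below `u*` cannot cross any level strictly
between `u 0` and `u*` (there `u' = -u < 0`), hence stays in that regime forever and equals
`u 0 * exp (-t)`.
-/

open Real Set Filter Topology

noncomputable def bestResponseDrift (a₁ a₂ x : ℝ) : ℝ :=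
  (1 - x) * (if a₁ * x > a₂ * (1 - x) then (1 : ℝ) else 0)
    - x * (if a₁ * x < a₂ * (1 - x) then (1 : ℝ) else 0)

theorem bestResponseDrift_of_lt_div {a₁ a₂ x : ℝ} (hsum : 0 < a₁ + a₂)
    (hx : x < a₂ / (a₁ + a₂)) : bestResponseDrift a₁ a₂ x = -x := by
  have hlt : a₁ * x < a₂ * (1 - x) := by
    have := (lt_div_iff₀ hsum).mp hx
    linarith
  simp [bestResponseDrift, hlt, not_lt.mpr hlt.le]

theorem le_of_hasDerivAt_of_neg_at_level {f f' : ℝ → ℝ} {c : ℝ}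
    (hf : ∀ t, 0 ≤ t → HasDerivAt f (f' t) t) (h0 : f 0 ≤ c)
    (hlevel : ∀ t, 0 ≤ t → f t = c → f' t < 0) {t : ℝ} (ht : 0 ≤ t) : f t ≤ c := by
  exact image_le_of_deriv_right_lt_deriv_boundary (a := 0) (b := t) (B' := fun _ => 0)
    (fun s hs => (hf s hs.1).continuousAt.continuousWithinAt)
    (fun s hs => (hf s hs.1).hasDerivWithinAt) h0 (fun _ => hasDerivAt_const _ c)
    (fun s hs => hlevel s hs.1) ⟨ht, le_rfl⟩

theorem eq_mul_exp_neg_of_hasDerivAt_neg {f : ℝ → ℝ} (hf : ∀ t, 0 ≤ t → HasDerivAt f (-f t) t)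
    {t : ℝ} (ht : 0 ≤ t) : f t = f 0 * exp (-t) := by
  have hg : ∀ s, 0 ≤ s → HasDerivAt (fun s => f s * exp s) 0 s := fun s hs => by
    have := (hf s hs).mul (hasDerivAt_exp s)
    rwa [neg_mul, neg_add_cancel] at this
  have hconst := constant_of_has_deriv_right_zero (a := 0) (b := t)
    (fun s hs => (hg s hs.1).continuousAt.continuousWithinAt)
    (fun s hs => (hg s hs.1).hasDerivWithinAt) t ⟨ht, le_rfl⟩
  simp only [exp_zero, mul_one] at hconst
  rw [← hconst, mul_assoc, ← exp_add, add_neg_cancel, exp_zero, mul_one]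

/-- Mean-field best-response ODE: if both strategies are selfish (`a₁ > 0` and `a₂ > 0`),
then every solution taking values in `[0,1]` with initial condition below
`u* := a₂ / (a₁ + a₂)` converges to `0` (the other half of bistability). -/
theorem meanfield_selfish_selfish_bistable_down (a₁ a₂ : ℝ) (ha₁ : 0 < a₁) (ha₂ : 0 < a₂)
    (u : ℝ → ℝ)
    (hrange : ∀ t : ℝ, 0 ≤ t → u t ∈ Set.Icc (0 : ℝ) 1)
    (hode : ∀ t : ℝ, 0 ≤ t →
      HasDerivAt u
        ((1 - u t) * (if a₁ * u t > a₂ * (1 - u t) then (1 : ℝ) else 0)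
          - u t * (if a₁ * u t < a₂ * (1 - u t) then (1 : ℝ) else 0)) t)
    (h0 : u 0 < a₂ / (a₁ + a₂)) :
    Filter.Tendsto u Filter.atTop (nhds 0) := by
  have hsum : 0 < a₁ + a₂ := add_pos ha₁ ha₂
  obtain ⟨c, hc0, hc⟩ := exists_between h0
  have hode' : ∀ t, 0 ≤ t → HasDerivAt u (bestResponseDrift a₁ a₂ (u t)) t := hode
  have hbelow : ∀ t, 0 ≤ t → u t ≤ c := fun t ht =>
    le_of_hasDerivAt_of_neg_at_level hode' hc0.le (fun s _ hs => by
      rw [hs, bestResponseDrift_of_lt_div hsum hc]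
      linarith [(hrange 0 le_rfl).1]) ht
  have hdecay : ∀ t, 0 ≤ t → HasDerivAt u (-u t) t := fun t ht => by
    simpa [bestResponseDrift_of_lt_div hsum ((hbelow t ht).trans_lt hc)] using hode' t ht
  have hlim := tendsto_exp_neg_atTop_nhds_zero.const_mul (u 0)
  rw [mul_zero] at hlim
  refine hlim.congr' ?_
  filter_upwards [eventually_ge_atTop 0] with t ht
  exact (eq_mul_exp_neg_of_hasDerivAt_neg hdecay ht).symm
end

section
/- If a configuration η ⊆ ℤ^d is a union of hypercubes, then every site x ∈ η has at least d neighbors in η and at most d neighbors outside η, i.e. N₁(x,η) ≥ d and N₂(x,η) ≤ d. -/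
/-- Two sites of `ℤᵈ` are neighbors iff their `ℓ¹`-distance equals `1`. -/
def Neighbor (d : ℕ) (x y : Fin d → ℤ) : Prop :=
  (∑ i, (x i - y i).natAbs) = 1

/-- Number of neighbors of `x` following strategy 1 (i.e. belonging to `η`). -/
noncomputable def N1 (d : ℕ) (η : Set (Fin d → ℤ)) (x : Fin d → ℤ) : ℕ :=
  Set.ncard {y | Neighbor d x y ∧ y ∈ η}

/-- Number of neighbors of `x` following strategy 2 (i.e. not belonging to `η`). -/
noncomputable def N2 (d : ℕ) (η : Set (Fin d → ℤ)) (x : Fin d → ℤ) : ℕ :=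
  Set.ncard {y | Neighbor d x y ∧ y ∉ η}

/-- The best-response map on configurations. -/
def Phi (d : ℕ) (a₁ a₂ : ℝ) (η : Set (Fin d → ℤ)) : Set (Fin d → ℤ) :=
  {x | a₁ * (N1 d η x : ℝ) > a₂ * (N2 d η x : ℝ) ∨
    (x ∈ η ∧ a₁ * (N1 d η x : ℝ) = a₂ * (N2 d η x : ℝ))}

/-- The hypercube `H_z = 2z + {0,1}^d`. -/
def Hcube (d : ℕ) (z : Fin d → ℤ) : Set (Fin d → ℤ) :=
  {x | ∀ i, x i = 2 * z i ∨ x i = 2 * z i + 1}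

/-- A configuration is a union of hypercubes if it is `⋃_{z ∈ S} H_z` for some `S ⊆ ℤᵈ`. -/
def IsUnionOfHypercubes (d : ℕ) (η : Set (Fin d → ℤ)) : Prop :=
  ∃ S : Set (Fin d → ℤ), η = ⋃ z ∈ S, Hcube d z

/-! A site `x` of a hypercube `H_z` has exactly one neighbor in each coordinate direction that
stays in `H_z`, obtained by switching `x i` between `2 z i` and `2 z i + 1`; these `d` sites lie
in `η`. Every other neighbor of `x` leaves `H_z` in some direction `i` and is then the unique
"outer" neighbor in that direction, so at most `d` neighbors of `x` can lie outside `η`. -/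

open Function

section Neighbor

variable {d : ℕ}

lemma natAbs_sub_le_one_of_neighbor {x y : Fin d → ℤ} (h : Neighbor d x y) (i : Fin d) :
    (x i - y i).natAbs ≤ 1 :=
  h ▸ Finset.single_le_sum (f := fun j => (x j - y j).natAbs) (fun _ _ => Nat.zero_le _)
    (Finset.mem_univ i)

lemma neighbor_update_iff (x : Fin d → ℤ) (i : Fin d) (a : ℤ) :
    Neighbor d x (update x i a) ↔ (x i - a).natAbs = 1 := by
  unfold Neighbor
  rw [Fintype.sum_eq_single i fun j hj => by simp [update_of_ne hj], update_self]

lemma Neighbor.eq_update {x y : Fin d → ℤ} (h : Neighbor d x y) :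
    ∃ i, (x i - y i).natAbs = 1 ∧ y = update x i (y i) := by
  obtain ⟨i, hi⟩ : ∃ i, (x i - y i).natAbs ≠ 0 := by
    by_contra! h0
    simp [Neighbor, h0] at h
  have hi₁ : (x i - y i).natAbs = 1 := by
    have := natAbs_sub_le_one_of_neighbor h i
    omega
  have hrest : ∑ j ∈ Finset.univ.erase i, (x j - y j).natAbs = 0 := by
    have := Finset.add_sum_erase Finset.univ (fun j => (x j - y j).natAbs) (Finset.mem_univ i)
    unfold Neighbor at h
    omega
  refine ⟨i, hi₁, funext fun j => ?_⟩
  rcases eq_or_ne j i with rfl | hj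
  · simp
  · have := Finset.sum_eq_zero_iff.mp hrest j (Finset.mem_erase.mpr ⟨hj, Finset.mem_univ j⟩)
    rw [update_of_ne hj]
    omega

lemma setOf_neighbor_finite (x : Fin d → ℤ) : {y | Neighbor d x y}.Finite :=
  (Set.Finite.pi fun i => Set.finite_Icc (x i - 1) (x i + 1)).subset fun y hy i _ => by
    have := natAbs_sub_le_one_of_neighbor hy i
    simp only [Set.mem_Icc]
    omega

end Neighbor

section Hcube

variable {d : ℕ} {z x : Fin d → ℤ}

/-- `4 z i + 1 - x i` swaps `2 z i` and `2 z i + 1`. -/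
def innerNeighbor (z x : Fin d → ℤ) (i : Fin d) : Fin d → ℤ :=
  update x i (4 * z i + 1 - x i)

/-- `3 x i - 4 z i - 1` sends `2 z i` to `2 z i - 1` and `2 z i + 1` to `2 z i + 2`. -/
def outerNeighbor (z x : Fin d → ℤ) (i : Fin d) : Fin d → ℤ :=
  update x i (3 * x i - 4 * z i - 1)

lemma update_mem_Hcube (hx : x ∈ Hcube d z) {i : Fin d} {a : ℤ}
    (ha : a = 2 * z i ∨ a = 2 * z i + 1) : update x i a ∈ Hcube d z := by
  intro j
  rcases eq_or_ne j i with rfl | hj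
  · simpa using ha
  · simpa [update_of_ne hj] using hx j

lemma innerNeighbor_mem_Hcube (hx : x ∈ Hcube d z) (i : Fin d) :
    innerNeighbor z x i ∈ Hcube d z :=
  update_mem_Hcube hx (by have := hx i; omega)

lemma neighbor_innerNeighbor (hx : x ∈ Hcube d z) (i : Fin d) :
    Neighbor d x (innerNeighbor z x i) :=
  (neighbor_update_iff x i _).2 (by have := hx i; omega)

lemma innerNeighbor_injective (hx : x ∈ Hcube d z) : Injective (innerNeighbor z x) := by
  intro i j hij
  by_contra hne
  have := congrFun hij i
  simp only [innerNeighbor, update_self, update_of_ne hne] at this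
  have := hx i
  omega

lemma Neighbor.mem_range_outerNeighbor_of_notMem_Hcube (hx : x ∈ Hcube d z) {y : Fin d → ℤ}
    (hy : Neighbor d x y) (hyz : y ∉ Hcube d z) : y ∈ Set.range (outerNeighbor z x) := by
  obtain ⟨i, hi, hy_eq⟩ := hy.eq_update
  have hxi := hx i
  refine ⟨i, hy_eq ▸ congrArg (update x i) ?_⟩
  by_contra hne
  exact hyz (hy_eq ▸ update_mem_Hcube hx (by omega))

variable {η : Set (Fin d → ℤ)}

lemma le_N1_of_Hcube_subset (hx : x ∈ Hcube d z) (hη : Hcube d z ⊆ η) : d ≤ N1 d η x := by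
  have hsub : Set.range (innerNeighbor z x) ⊆ {y | Neighbor d x y ∧ y ∈ η} := by
    rintro _ ⟨i, rfl⟩
    exact ⟨neighbor_innerNeighbor hx i, hη (innerNeighbor_mem_Hcube hx i)⟩
  calc d = (Set.range (innerNeighbor z x)).ncard := by
        rw [Set.ncard_range_of_injective (innerNeighbor_injective hx), Nat.card_fin]
    _ ≤ N1 d η x := Set.ncard_le_ncard hsub ((setOf_neighbor_finite x).subset fun _ hy => hy.1)

lemma N2_le_of_Hcube_subset (hx : x ∈ Hcube d z) (hη : Hcube d z ⊆ η) : N2 d η x ≤ d := by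
  have hsub : {y | Neighbor d x y ∧ y ∉ η} ⊆ Set.range (outerNeighbor z x) :=
    fun y hy => hy.1.mem_range_outerNeighbor_of_notMem_Hcube hx fun hyz => hy.2 (hη hyz)
  calc N2 d η x ≤ (Set.range (outerNeighbor z x)).ncard :=
        Set.ncard_le_ncard hsub (Set.finite_range _)
    _ ≤ (Set.univ : Set (Fin d)).ncard := by
        rw [← Set.image_univ]
        exact Set.ncard_image_le Set.finite_univ
    _ = d := by rw [Set.ncard_univ, Nat.card_fin]

end Hcube

theorem union_of_hypercubes_neighbor_count_general (d : ℕ)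
    (η : Set (Fin d → ℤ)) (hη : IsUnionOfHypercubes d η) :
    ∀ x ∈ η, d ≤ N1 d η x ∧ N2 d η x ≤ d := by
  obtain ⟨S, rfl⟩ := hη
  intro x hx
  obtain ⟨z, hzS, hxz⟩ := Set.mem_iUnion₂.mp hx
  have hsub : Hcube d z ⊆ ⋃ z ∈ S, Hcube d z := Set.subset_biUnion_of_mem hzS
  exact ⟨le_N1_of_Hcube_subset hxz hsub, N2_le_of_Hcube_subset hxz hsub⟩

/-- In a configuration that is a union of hypercubes, every occupied site has at least
`d` neighbors of type 1 and at most `d` neighbors of type 2. -/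
theorem union_of_hypercubes_neighbor_count (d : ℕ) (hd : 1 ≤ d)
    (η : Set (Fin d → ℤ)) (hη : IsUnionOfHypercubes d η) :
    ∀ x ∈ η, d ≤ N1 d η x ∧ N2 d η x ≤ d :=
  union_of_hypercubes_neighbor_count_general d η hη
end

section
/- If a₁ > a₂ > 0 and the configuration η ⊆ ℤ^d is a union of hypercubes, then every x ∈ η satisfies a₁·N₁(x,η) > a₂·N₂(x,η); in particular η ⊆ Φ(η). -/
/-!
A site `x ∈ H_z ⊆ η` has, in each of the `d` directions, a neighbor inside `H_z` (flip the
coordinate between `2 z i` and `2 z i + 1`), so `N₁ ≥ d`. Since `x` has at most `2d` neighbors,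
`N₂ ≤ d ≤ N₁`; with `N₁ ≥ 1` and `a₁ > a₂ > 0` this gives `a₁ N₁ > a₂ N₁ ≥ a₂ N₂`.
-/

lemma neighbor_iff (d : ℕ) (x y : Fin d → ℤ) :
    Neighbor d x y ↔ ∃ i, (x i - y i).natAbs = 1 ∧ ∀ j, j ≠ i → y j = x j := by
  constructor
  · intro h
    obtain ⟨i, -, hi⟩ : ∃ i ∈ Finset.univ, (x i - y i).natAbs ≠ 0 :=
      Finset.exists_ne_zero_of_sum_ne_zero (by rw [h]; exact one_ne_zero)
    have hsplit : (x i - y i).natAbs + ∑ j ∈ Finset.univ.erase i, (x j - y j).natAbs = 1 := by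
      rwa [Finset.add_sum_erase _ (fun j => (x j - y j).natAbs) (Finset.mem_univ i)]
    have hrest : ∑ j ∈ Finset.univ.erase i, (x j - y j).natAbs = 0 := by omega
    refine ⟨i, by omega, fun j hj => ?_⟩
    have := Finset.sum_eq_zero_iff.mp hrest j (Finset.mem_erase.mpr ⟨hj, Finset.mem_univ j⟩)
    omega
  · rintro ⟨i, hi, hrest⟩
    rw [Neighbor, Finset.sum_eq_single i (fun j _ hj => by simp [hrest j hj]) (by simp)]
    exact hi

lemma setOf_neighbor_subset_range (d : ℕ) (x : Fin d → ℤ) :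
    {y | Neighbor d x y} ⊆
      Set.range fun p : Fin d × Bool => Function.update x p.1 (x p.1 + if p.2 then 1 else -1) := by
  intro y hy
  obtain ⟨i, hi, hrest⟩ := (neighbor_iff d x y).mp hy
  refine ⟨(i, decide (y i = x i + 1)), ?_⟩
  rw [eq_comm, Function.eq_update_iff]
  exact ⟨by by_cases h : y i = x i + 1 <;> simp [h]; omega, hrest⟩

lemma ncard_setOf_neighbor_le (d : ℕ) (x : Fin d → ℤ) : {y | Neighbor d x y}.ncard ≤ 2 * d :=
  calc {y | Neighbor d x y}.ncard
      ≤ (Set.range fun p : Fin d × Bool =>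
          Function.update x p.1 (x p.1 + if p.2 then 1 else -1)).ncard :=
        Set.ncard_le_ncard (setOf_neighbor_subset_range d x) (Set.finite_range _)
    _ ≤ (Set.univ : Set (Fin d × Bool)).ncard := by
        rw [← Set.image_univ]; exact Set.ncard_image_le Set.finite_univ
    _ = 2 * d := by simp [mul_comm]

lemma finite_setOf_neighbor (d : ℕ) (x : Fin d → ℤ) : {y | Neighbor d x y}.Finite :=
  (Set.finite_range _).subset (setOf_neighbor_subset_range d x)

lemma N1_add_N2_le (d : ℕ) (η : Set (Fin d → ℤ)) (x : Fin d → ℤ) :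
    N1 d η x + N2 d η x ≤ 2 * d := by
  have hfin := finite_setOf_neighbor d x
  have hunion : {y | Neighbor d x y ∧ y ∈ η} ∪ {y | Neighbor d x y ∧ y ∉ η} =
      {y | Neighbor d x y} := by
    ext y; by_cases y ∈ η <;> simp [*]
  rw [N1, N2, ← Set.ncard_union_eq (Set.disjoint_left.mpr fun y h h' => h'.2 h.2)
    (hfin.subset fun y hy => hy.1) (hfin.subset fun y hy => hy.1), hunion]
  exact ncard_setOf_neighbor_le d x

/-- Swaps `2 z i ↔ 2 z i + 1` in coordinate `i`: for `x ∈ H_z`, the neighbor of `x` in direction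
`i` that stays in `H_z`. -/
def Hcube.flip (d : ℕ) (z x : Fin d → ℤ) (i : Fin d) : Fin d → ℤ :=
  Function.update x i (4 * z i + 1 - x i)

section Hcube

variable {d : ℕ} {z x : Fin d → ℤ}

lemma Hcube.neighbor_flip (hx : x ∈ Hcube d z) (i : Fin d) :
    Neighbor d x (Hcube.flip d z x i) := by
  refine (neighbor_iff d x _).mpr ⟨i, ?_, fun j hj => Function.update_of_ne hj _ _⟩
  rcases hx i with h | h <;> simp [Hcube.flip, h] <;> omega

lemma Hcube.flip_mem (hx : x ∈ Hcube d z) (i : Fin d) : Hcube.flip d z x i ∈ Hcube d z := by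
  intro j
  by_cases hj : j = i
  · subst hj; rcases hx j with h | h <;> simp [Hcube.flip, h] <;> omega
  · rw [Hcube.flip, Function.update_of_ne hj]; exact hx j

lemma Hcube.flip_injective (hx : x ∈ Hcube d z) : Function.Injective (Hcube.flip d z x) := by
  intro i j hij
  by_contra hne
  have := congrFun hij i
  rw [Hcube.flip, Hcube.flip, Function.update_self, Function.update_of_ne hne] at this
  rcases hx i with h | h <;> omega

lemma le_N1_of_mem_Hcube {η : Set (Fin d → ℤ)} (hx : x ∈ Hcube d z) (hz : Hcube d z ⊆ η) :
    d ≤ N1 d η x := by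
  have := Set.ncard_le_ncard_of_injOn (s := Set.univ) (t := {y | Neighbor d x y ∧ y ∈ η})
    (Hcube.flip d z x) (fun i _ => ⟨Hcube.neighbor_flip hx i, hz (Hcube.flip_mem hx i)⟩)
    (Hcube.flip_injective hx).injOn ((finite_setOf_neighbor d x).subset fun y hy => hy.1)
  simpa [N1] using this

end Hcube

/-- If `a₁ > a₂ > 0` and `η` is a union of hypercubes, then every occupied site strictly
prefers strategy 1; in particular `η ⊆ Φ(η)`. -/
theorem union_of_hypercubes_subset_Phi (d : ℕ) (hd : 1 ≤ d) (a₁ a₂ : ℝ)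
    (ha : a₁ > a₂) (ha₂ : 0 < a₂)
    (η : Set (Fin d → ℤ)) (hη : IsUnionOfHypercubes d η) :
    (∀ x ∈ η, a₁ * (N1 d η x : ℝ) > a₂ * (N2 d η x : ℝ)) ∧ η ⊆ Phi d a₁ a₂ η := by
  obtain ⟨S, hS⟩ := hη
  have prefers_one : ∀ x ∈ η, a₁ * (N1 d η x : ℝ) > a₂ * (N2 d η x : ℝ) := by
    intro x hx
    obtain ⟨z, hzS, hxz⟩ := Set.mem_iUnion₂.mp (hS ▸ hx)
    have hN1 : d ≤ N1 d η x := le_N1_of_mem_Hcube hxz (hS ▸ Set.subset_biUnion_of_mem hzS)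
    have hN2 : (N2 d η x : ℝ) ≤ N1 d η x := by
      have := N1_add_N2_le d η x
      exact_mod_cast (by omega : N2 d η x ≤ N1 d η x)
    have hpos : (0 : ℝ) < N1 d η x := by exact_mod_cast hd.trans hN1
    calc a₂ * (N2 d η x : ℝ)
        ≤ a₂ * N1 d η x := mul_le_mul_of_nonneg_left hN2 ha₂.le
      _ < a₁ * N1 d η x := mul_lt_mul_of_pos_right ha hpos
  exact ⟨prefers_one, fun x hx => Or.inl (prefers_one x hx)⟩
end

section
/- Let a₁ > 0 and a₂ > 0, let η ⊆ ℤ^d be a configuration with η ⊆ Φ(η), let x₀ ∈ ℤ^d, and let η' be the configuration obtained from η by a single best-response update at x₀, i.e. η' agrees with η at every site other than x₀ and x₀ ∈ η' if and only if x₀ ∈ Φ(η). Then η ⊆ η' ⊆ Φ(η), Φ(η) ⊆ Φ(η'), and η' ⊆ Φ(η'). -/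
lemma N1_mono (d : ℕ) {η η' : Set (Fin d → ℤ)} (h : η ⊆ η') (x : Fin d → ℤ) :
    N1 d η x ≤ N1 d η' x :=
  Set.ncard_le_ncard (fun _ hy => ⟨hy.1, h hy.2⟩)
    ((finite_setOf_neighbor d x).subset fun _ hy => hy.1)

lemma N2_anti (d : ℕ) {η η' : Set (Fin d → ℤ)} (h : η ⊆ η') (x : Fin d → ℤ) :
    N2 d η' x ≤ N2 d η x :=
  Set.ncard_le_ncard (fun _ hy => ⟨hy.1, fun hη => hy.2 (h hη)⟩)
    ((finite_setOf_neighbor d x).subset fun _ hy => hy.1)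

lemma Phi_monotone (d : ℕ) {a₁ a₂ : ℝ} (ha₁ : 0 ≤ a₁) (ha₂ : 0 ≤ a₂) :
    Monotone (Phi d a₁ a₂) := by
  intro η η' h x hx
  have hN1 : a₁ * (N1 d η x : ℝ) ≤ a₁ * (N1 d η' x : ℝ) := by
    gcongr; exact N1_mono d h x
  have hN2 : a₂ * (N2 d η' x : ℝ) ≤ a₂ * (N2 d η x : ℝ) := by
    gcongr; exact N2_anti d h x
  rcases hx with hlt | ⟨hx, heq⟩
  · exact Or.inl (by linarith)
  · rcases (hN2.trans (heq.ge.trans hN1)).lt_or_eq with hlt | heq'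
    · exact Or.inl hlt
    · exact Or.inr ⟨h hx, heq'.symm⟩

lemma subset_and_subset_of_forall_ne_mem_iff {α : Type*} {s t u : Set α} {a : α} (hsu : s ⊆ u)
    (hoff : ∀ y, y ≠ a → (y ∈ t ↔ y ∈ s)) (hat : a ∈ t ↔ a ∈ u) : s ⊆ t ∧ t ⊆ u := by
  constructor <;> intro y hy <;> rcases eq_or_ne y a with rfl | hya
  · exact hat.2 (hsu hy)
  · exact (hoff y hya).2 hy
  · exact hat.1 hy
  · exact hsu ((hoff y hya).1 hy)

theorem single_update_monotone_general (d : ℕ) (a₁ a₂ : ℝ)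
    (ha₁ : 0 < a₁) (ha₂ : 0 < a₂)
    (η η' : Set (Fin d → ℤ)) (hη : η ⊆ Phi d a₁ a₂ η) (x₀ : Fin d → ℤ)
    (hoff : ∀ y : Fin d → ℤ, y ≠ x₀ → (y ∈ η' ↔ y ∈ η))
    (hat : x₀ ∈ η' ↔ x₀ ∈ Phi d a₁ a₂ η) :
    η ⊆ η' ∧ η' ⊆ Phi d a₁ a₂ η ∧ Phi d a₁ a₂ η ⊆ Phi d a₁ a₂ η' ∧
      η' ⊆ Phi d a₁ a₂ η' := by
  obtain ⟨hηη', hη'Φ⟩ := subset_and_subset_of_forall_ne_mem_iff hη hoff hat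
  have hΦ := Phi_monotone d ha₁.le ha₂.le hηη'
  exact ⟨hηη', hη'Φ, hΦ, hη'Φ.trans hΦ⟩

/-- A single best-response update at a site `x₀`, applied to a configuration `η` with
`η ⊆ Φ(η)`, produces a configuration `η'` with `η ⊆ η' ⊆ Φ(η)`, `Φ(η) ⊆ Φ(η')` and
`η' ⊆ Φ(η')`. -/
theorem single_update_monotone (d : ℕ) (hd : 1 ≤ d) (a₁ a₂ : ℝ)
    (ha₁ : 0 < a₁) (ha₂ : 0 < a₂)
    (η η' : Set (Fin d → ℤ)) (hη : η ⊆ Phi d a₁ a₂ η) (x₀ : Fin d → ℤ)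
    (hoff : ∀ y : Fin d → ℤ, y ≠ x₀ → (y ∈ η' ↔ y ∈ η))
    (hat : x₀ ∈ η' ↔ x₀ ∈ Phi d a₁ a₂ η) :
    η ⊆ η' ∧ η' ⊆ Phi d a₁ a₂ η ∧ Phi d a₁ a₂ η ⊆ Phi d a₁ a₂ η' ∧
      η' ⊆ Phi d a₁ a₂ η' :=
  single_update_monotone_general d a₁ a₂ ha₁ ha₂ η η' hη x₀ hoff hat
end
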